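/- Let X₁,…,X_d be independent with Xᵢ ~ Poisson(m·pᵢ) and Z = Σᵢ ((Xᵢ − m·qᵢ)² − Xᵢ) where p, q ∈ [0,1]^d. Then E[Z] = m²‖p−q‖₂² and Var(Z) ≤ 4m³‖p‖₂·‖p−q‖₄² + 2m²‖p‖₂². -/

import Mathlib

/-- Poisson probability mass function with mean μ. -/
noncomputable def pois (μ : ℝ) (k : ℕ) : ℝ :=
  Real.exp (-μ) * μ^k / (Nat.factorial k)

/-- Joint PMF of independent Poisson variables with means μ i. -/
noncomputable def jointPois {d : ℕ} (μ : Fin d → ℝ) (x : Fin d → ℕ) : ℝ :=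
  ∏ i, pois (μ i) (x i)

/-!
Poisson moments are simplest in the falling-factorial basis: `E[X(X-1)⋯(X-r+1)] = μ ^ r`.
Writing `Yᵢ = (Xᵢ - m qᵢ)² - Xᵢ` in that basis gives `E Yᵢ = m²(pᵢ - qᵢ)²` and
`Var Yᵢ = 4m³pᵢ(pᵢ - qᵢ)² + 2m²pᵢ²`. The joint law is a product, so means add and, the centred
`Yᵢ` being independent, so do variances. Cauchy–Schwarz then bounds `∑ pᵢ(pᵢ - qᵢ)²` by
`‖p‖₂ ‖p - q‖₄²`.
-/

open Finset

theorem hasSum_pois (μ : ℝ) : HasSum (pois μ) 1 := by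
  have h := (NormedSpace.expSeries_div_hasSum_exp μ).mul_left (Real.exp (-μ))
  rw [← congrFun Real.exp_eq_exp_ℝ μ, ← Real.exp_add, neg_add_cancel, Real.exp_zero] at h
  unfold pois
  simpa only [mul_div_assoc] using h

theorem pois_add_mul_descFactorial (μ : ℝ) (j r : ℕ) :
    pois μ (j + r) * (j + r).descFactorial r = μ ^ r * pois μ j := by
  have hfac : (j.factorial : ℝ) * (j + r).descFactorial r = (j + r).factorial := by
    exact_mod_cast Nat.add_sub_cancel j r ▸ Nat.factorial_mul_descFactorial (Nat.le_add_left r j)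
  have hD : ((j + r).descFactorial r : ℝ) ≠ 0 := by
    exact_mod_cast (Nat.descFactorial_pos.2 (Nat.le_add_left r j)).ne'
  simp only [pois]
  rw [← hfac, pow_add]
  field_simp

theorem hasSum_pois_mul_descFactorial (μ : ℝ) (r : ℕ) :
    HasSum (fun k => pois μ k * k.descFactorial r) (μ ^ r) := by
  have hsupp : ∀ k ∉ Set.range (· + r), pois μ k * k.descFactorial r = 0 := by
    intro k hk
    have hkr : k < r := by
      by_contra! h
      exact hk ⟨k - r, Nat.sub_add_cancel h⟩
    simp [Nat.descFactorial_eq_zero_iff_lt.2 hkr]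
  rw [← (add_left_injective r).hasSum_iff hsupp]
  simpa [Function.comp_def, pois_add_mul_descFactorial] using (hasSum_pois μ).mul_left (μ ^ r)

theorem hasSum_pois_mul_sum_descFactorial (μ : ℝ) {n : ℕ} (a : Fin n → ℝ) :
    HasSum (fun k => pois μ k * ∑ r, a r * k.descFactorial (r : ℕ)) (∑ r, a r * μ ^ (r : ℕ)) := by
  simpa [mul_sum, mul_left_comm] using
    hasSum_sum fun (r : Fin n) _ => (hasSum_pois_mul_descFactorial μ r).mul_left (a r)

theorem cast_descFactorial_eq_prod_range (k r : ℕ) :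
    (k.descFactorial r : ℝ) = ∏ j ∈ range r, ((k : ℝ) - j) := by
  rw [← descPochhammer_eval_eq_descFactorial, descPochhammer_eval_eq_prod_range]

theorem hasSum_pois_mul_sq_sub_sub (μ c : ℝ) :
    HasSum (fun k => pois μ k * (((k : ℝ) - c) ^ 2 - k)) ((μ - c) ^ 2) := by
  convert hasSum_pois_mul_sum_descFactorial μ ![c ^ 2, -2 * c, 1] using 1
  · ext k
    congr 1
    simp only [Fin.sum_univ_succ, Fin.sum_univ_zero, Matrix.cons_val_zero, Matrix.cons_val_succ,
      Fin.val_zero, Fin.val_succ, cast_descFactorial_eq_prod_range, prod_range_succ, prod_range_zero]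
    push_cast
    ring
  · simp only [Fin.sum_univ_succ, Fin.sum_univ_zero, Matrix.cons_val_zero, Matrix.cons_val_succ,
      Fin.val_zero, Fin.val_succ]
    ring

theorem hasSum_pois_mul_sq_sub_sub_sub_sq (μ c : ℝ) :
    HasSum (fun k => pois μ k * (((k : ℝ) - c) ^ 2 - k - (μ - c) ^ 2) ^ 2)
      (4 * μ * (μ - c) ^ 2 + 2 * μ ^ 2) := by
  set b := c ^ 2 - (μ - c) ^ 2
  -- `(k - c)² - k - (μ - c)² = k⁽²⁾ - 2ck + b`; square it using `k⁽²⁾k⁽²⁾ = k⁽⁴⁾ + 4k⁽³⁾ + 2k⁽²⁾`,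
  -- `k k⁽²⁾ = k⁽³⁾ + 2k⁽²⁾` and `k² = k⁽²⁾ + k`, where `k⁽ʳ⁾ = k.descFactorial r`.
  convert hasSum_pois_mul_sum_descFactorial μ
    ![b ^ 2, 4 * c ^ 2 - 4 * b * c, 2 - 8 * c + 4 * c ^ 2 + 2 * b, 4 - 4 * c, 1] using 1
  · ext k
    congr 1
    simp only [Fin.sum_univ_succ, Fin.sum_univ_zero, Matrix.cons_val_zero, Matrix.cons_val_succ,
      Fin.val_zero, Fin.val_succ, cast_descFactorial_eq_prod_range, prod_range_succ, prod_range_zero]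
    push_cast
    ring
  · simp only [Fin.sum_univ_succ, Fin.sum_univ_zero, Matrix.cons_val_zero, Matrix.cons_val_succ,
      Fin.val_zero, Fin.val_succ]
    ring

theorem hasSum_pois_mul_sq_sub_sub_sub (μ c : ℝ) :
    HasSum (fun k => pois μ k * (((k : ℝ) - c) ^ 2 - k - (μ - c) ^ 2)) 0 := by
  have h := (hasSum_pois_mul_sq_sub_sub μ c).sub ((hasSum_pois μ).mul_right ((μ - c) ^ 2))
  rw [one_mul, sub_self] at h
  simpa only [mul_sub] using h

section Product

variable {α : Type*}

theorem hasSum_pi_prod {n : ℕ} (G : Fin n → α → ℝ) (S : Fin n → ℝ)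
    (h : ∀ i, HasSum (G i) (S i)) :
    HasSum (fun x : Fin n → α => ∏ i, G i (x i)) (∏ i, S i) := by
  induction n with
  | zero =>
    simp only [univ_eq_empty, prod_empty]
    exact hasSum_unique (fun _ : Fin 0 → α => (1 : ℝ))
  | succ n ih =>
    rw [← (Fin.consEquiv fun _ => α).hasSum_iff]
    have hsucc : HasSum (fun y : Fin n → α => ∏ i : Fin n, G i.succ (y i)) (∏ i : Fin n, S i.succ) :=
      ih _ _ fun i => h i.succ
    have hnorm₀ : Summable fun k => ‖G 0 k‖ := (h 0).summable.norm
    have hnorm : Summable fun y : Fin n → α => ‖∏ i : Fin n, G i.succ (y i)‖ :=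
      hsucc.summable.norm
    have hsummable := summable_mul_of_summable_norm hnorm₀ hnorm
    simpa [Function.comp_def, Fin.consEquiv, Fin.prod_univ_succ] using (h 0).mul hsucc hsummable

theorem hasSum_pi_prod_mul_prod {n : ℕ} (g f : Fin n → α → ℝ) (a : Fin n → ℝ)
    (s : Finset (Fin n)) (hg : ∀ i, HasSum (g i) 1)
    (hf : ∀ i ∈ s, HasSum (fun k => g i k * f i k) (a i)) :
    HasSum (fun (x : Fin n → α) => (∏ i, g i (x i)) * ∏ i ∈ s, f i (x i)) (∏ i ∈ s, a i) := by
  have h := hasSum_pi_prod (fun i k => g i k * if i ∈ s then f i k else 1)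
    (fun i => if i ∈ s then a i else 1) fun i => by
      split_ifs with hi
      · exact hf i hi
      · simpa using hg i
  simpa only [prod_mul_distrib, prod_ite_mem, univ_inter] using h

theorem hasSum_pi_prod_mul_sum {n : ℕ} (g f : Fin n → α → ℝ) (a : Fin n → ℝ)
    (hg : ∀ i, HasSum (g i) 1) (hf : ∀ i, HasSum (fun k => g i k * f i k) (a i)) :
    HasSum (fun (x : Fin n → α) => (∏ i, g i (x i)) * ∑ i, f i (x i)) (∑ i, a i) := by
  simpa [mul_sum] using
    hasSum_sum fun i _ => hasSum_pi_prod_mul_prod g f a {i} hg (by simpa using hf i)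

theorem hasSum_pi_prod_mul_sum_sq {n : ℕ} (g f : Fin n → α → ℝ) (v : Fin n → ℝ)
    (hg : ∀ i, HasSum (g i) 1) (hf : ∀ i, HasSum (fun k => g i k * f i k) 0)
    (hf2 : ∀ i, HasSum (fun k => g i k * f i k ^ 2) (v i)) :
    HasSum (fun (x : Fin n → α) => (∏ i, g i (x i)) * (∑ i, f i (x i)) ^ 2) (∑ i, v i) := by
  have hpair : ∀ i j, HasSum (fun (x : Fin n → α) => (∏ l, g l (x l)) * (f i (x i) * f j (x j)))
      (if i = j then v i else 0) := by
    intro i j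
    split_ifs with hij
    · subst hij
      have h := hasSum_pi_prod_mul_prod g (fun l k => f l k ^ 2) v {i} hg (by simpa using hf2 i)
      simpa only [prod_singleton, sq] using h
    · have h := hasSum_pi_prod_mul_prod g f 0 {i, j} hg fun l _ => hf l
      simpa only [prod_pair hij, Pi.zero_apply, mul_zero] using h
  have h := hasSum_sum fun i (_ : i ∈ univ) => hasSum_sum fun j (_ : j ∈ univ) => hpair i j
  simp only [sum_ite_eq, mem_univ, if_true] at h
  have hexpand : ∀ x : Fin n → α, (∏ l, g l (x l)) * (∑ i, f i (x i)) ^ 2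
      = ∑ i, ∑ j, (∏ l, g l (x l)) * (f i (x i) * f j (x j)) := fun x => by
    rw [sq, sum_mul_sum]
    simp only [mul_sum]
  simpa only [hexpand] using h

end Product

theorem stmt6_general {d : ℕ} (m : ℝ) (hm : 0 < m) (p q : Fin d → ℝ) :
    (∑' x : Fin d → ℕ, jointPois (fun i => m * p i) x *
        (∑ i, (((x i : ℝ) - m * q i)^2 - x i)))
      = m^2 * ∑ i, (p i - q i)^2 ∧
    (∑' x : Fin d → ℕ, jointPois (fun i => m * p i) x *
        ((∑ i, (((x i : ℝ) - m * q i)^2 - x i)) - m^2 * ∑ i, (p i - q i)^2)^2)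
      ≤ 4 * m^3 * Real.sqrt (∑ i, (p i)^2) * Real.sqrt (∑ i, (p i - q i)^4)
          + 2 * m^2 * (∑ i, (p i)^2) := by
  set g : Fin d → ℕ → ℝ := fun i => pois (m * p i)
  have hg : ∀ i, HasSum (g i) 1 := fun i => hasSum_pois _
  have hscale : m ^ 2 * ∑ i, (p i - q i) ^ 2 = ∑ i, (m * p i - m * q i) ^ 2 := by
    rw [mul_sum]
    exact sum_congr rfl fun i _ => by ring
  have hmean := hasSum_pi_prod_mul_sum g _ _ hg fun i =>
    hasSum_pois_mul_sq_sub_sub (m * p i) (m * q i)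
  have hvar := hasSum_pi_prod_mul_sum_sq g _ _ hg
    (fun i => hasSum_pois_mul_sq_sub_sub_sub (m * p i) (m * q i))
    (fun i => hasSum_pois_mul_sq_sub_sub_sub_sq (m * p i) (m * q i))
  have hcs : ∑ i, p i * (p i - q i) ^ 2 ≤ √(∑ i, p i ^ 2) * √(∑ i, (p i - q i) ^ 4) := by
    have hpow : ∀ i, ((p i - q i) ^ 2) ^ 2 = (p i - q i) ^ 4 := fun i => by ring
    simpa only [← hpow] using Real.sum_mul_le_sqrt_mul_sqrt univ p fun i => (p i - q i) ^ 2
  simp_rw [hscale, ← sum_sub_distrib]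
  refine ⟨hmean.tsum_eq, ?_⟩
  calc _ = ∑ i, (4 * (m * p i) * (m * p i - m * q i) ^ 2 + 2 * (m * p i) ^ 2) := hvar.tsum_eq
    _ = 4 * m ^ 3 * ∑ i, p i * (p i - q i) ^ 2 + 2 * m ^ 2 * ∑ i, p i ^ 2 := by
      simp only [sum_add_distrib, mul_sum]
      congr 1 <;> exact sum_congr rfl fun i _ => by ring
    _ ≤ 4 * m ^ 3 * (√(∑ i, p i ^ 2) * √(∑ i, (p i - q i) ^ 4)) + 2 * m ^ 2 * ∑ i, p i ^ 2 := by
      gcongr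
    _ = _ := by ring

theorem stmt6 {d : ℕ} (m : ℝ) (hm : 0 < m) (p q : Fin d → ℝ)
    (hp : ∀ i, p i ∈ Set.Icc (0:ℝ) 1) (hq : ∀ i, q i ∈ Set.Icc (0:ℝ) 1) :
    (∑' x : Fin d → ℕ, jointPois (fun i => m * p i) x *
        (∑ i, (((x i : ℝ) - m * q i)^2 - x i)))
      = m^2 * ∑ i, (p i - q i)^2 ∧
    (∑' x : Fin d → ℕ, jointPois (fun i => m * p i) x *
        ((∑ i, (((x i : ℝ) - m * q i)^2 - x i)) - m^2 * ∑ i, (p i - q i)^2)^2)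
      ≤ 4 * m^3 * Real.sqrt (∑ i, (p i)^2) * Real.sqrt (∑ i, (p i - q i)^4)
          + 2 * m^2 * (∑ i, (p i)^2) :=
  stmt6_general m hm p q
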